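/- arXiv:1112.3673 — 3 statements merged into one kernel-verified Lean document; each statement's English description precedes it below -/
import Mathlib

section
/- Let x < y be real numbers and let ω ∈ ℂ. Assume that Re(conj(ω)·u(t)) ≥ 0 for all t ∈ [x, y]. Then, with M := max_{t ∈ [x,y]} |u(t)|, the inequality Re(conj(ω)·u(y)) ≥ Re(conj(ω)·u(x)) + (y − x)·Re(conj(ω)·u'(x)) − C₂·(y − x)·(y − x + 1)·|ω|·M holds. -/
open MeasureTheory Set

/-! With `f t = Re(conj ω · u t)`, the equation gives
`f'(s) - f'(x) = ∫_x^s Re(conj ω · (V - E) u)`. On `[x, y]` we have `0 ≤ Re(conj ω · u) ≤ |ω| M`,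
so only the negative part of `V` and the constant `E` can make this integrand negative, and it is
at least `-(V₋ + |E|) |ω| M`. Covering `[x, s]` by `⌈y - x⌉ ≤ y - x + 1` unit intervals bounds
`∫ V₋` by `C₁ (y - x + 1)`, so `f' ≥ f'(x) - C₂ (y - x + 1) |ω| M` on `[x, y]`; integrating once
more gives the claim. -/

theorem MeasureTheory.LocallyIntegrable.intervalIntegrable {E : Type*} [NormedAddCommGroup E]
    {f : ℝ → E} (hf : LocallyIntegrable f volume) (a b : ℝ) :
    IntervalIntegrable f volume a b :=
  (hf.integrableOn_isCompact isCompact_uIcc).intervalIntegrable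

theorem intervalIntegrable_negPart_of_locallyIntegrable {V : ℝ → ℝ}
    (hV : LocallyIntegrable V volume) (a b : ℝ) :
    IntervalIntegrable (fun t => max (-V t) 0) volume a b :=
  have h := hV.intervalIntegrable a b
  ⟨h.1.neg.pos_part, h.2.neg.pos_part⟩

theorem integral_add_nat_le_mul {g : ℝ → ℝ} (hgi : ∀ a b, IntervalIntegrable g volume a b) {C : ℝ}
    (hC : ∀ a, ∫ t in a..a + 1, g t ≤ C) (x : ℝ) (n : ℕ) : ∫ t in x..x + n, g t ≤ C * n := by
  induction n with
  | zero => simp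
  | succ k ih =>
    rw [← intervalIntegral.integral_add_adjacent_intervals (hgi x (x + k)) (hgi _ _)]
    push_cast
    rw [← add_assoc]
    linarith [hC (x + k)]

theorem integral_le_mul_add_one {g : ℝ → ℝ} (hg : 0 ≤ g)
    (hgi : ∀ a b, IntervalIntegrable g volume a b) {C : ℝ} (hC : ∀ a, ∫ t in a..a + 1, g t ≤ C)
    {x s L : ℝ} (hxs : x ≤ s) (hsL : s ≤ x + L) :
    ∫ t in x..s, g t ≤ C * (L + 1) := by
  have hC0 : 0 ≤ C :=
    (intervalIntegral.integral_nonneg (by linarith) fun t _ => hg t).trans (hC 0)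
  have hL : L ≤ ⌈L⌉₊ := Nat.le_ceil L
  calc ∫ t in x..s, g t ≤ ∫ t in x..x + ⌈L⌉₊, g t :=
        intervalIntegral.integral_mono_interval le_rfl hxs (by linarith)
          (Filter.Eventually.of_forall hg) (hgi _ _)
    _ ≤ C * ⌈L⌉₊ := integral_add_nat_le_mul hgi hC x _
    _ ≤ C * (L + 1) :=
        mul_le_mul_of_nonneg_left (Nat.ceil_lt_add_one (by linarith)).le hC0

theorem neg_mul_norm_le_re_mul_sub_mul {v : ℝ} {E w z : ℂ} (hwz : 0 ≤ (w * z).re) :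
    -((max (-v) 0 + ‖E‖) * ‖w * z‖) ≤ (w * ((v - E) * z)).re := by
  have hsplit : (w * ((v - E) * z)).re = v * (w * z).re - (E * (w * z)).re := by
    rw [show w * ((v - E) * z) = v * (w * z) - E * (w * z) by ring, Complex.sub_re,
      Complex.re_ofReal_mul]
  have hE : (E * (w * z)).re ≤ ‖E‖ * ‖w * z‖ :=
    (Complex.re_le_norm _).trans (norm_mul _ _).le
  have hv : -max (-v) 0 * ‖w * z‖ ≤ v * (w * z).re := by
    nlinarith [le_max_left (-v) 0, le_max_right (-v) 0, Complex.re_le_norm (w * z)]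
  rw [hsplit]
  linarith

theorem add_mul_deriv_sub_mul_le {f f' : ℝ → ℝ} (hf : ∀ t, HasDerivAt f (f' t) t) {x y B : ℝ}
    (hxy : x ≤ y) (hB : ∀ s ∈ Icc x y, -B ≤ f' s - f' x) :
    f x + (y - x) * f' x - B * (y - x) ≤ f y := by
  have hF : ∀ s, HasDerivAt (fun s => f s - s * f' x) (f' s - f' x) s := fun s =>
    (hf s).sub (by simpa using (hasDerivAt_id s).mul_const (f' x))
  have := (convex_Icc x y).mul_sub_le_image_sub_of_le_deriv
    (fun s _ => (hF s).continuousAt.continuousWithinAt)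
    (fun s _ => (hF s).differentiableAt.differentiableWithinAt)
    (fun s hs => by rw [(hF s).deriv]; exact hB s (interior_subset hs))
    x (left_mem_Icc.2 hxy) y (right_mem_Icc.2 hxy) hxy
  linarith

theorem intervalIntegrable_potential_mul {V : ℝ → ℝ} (hV : LocallyIntegrable V volume) (E : ℂ)
    {u : ℝ → ℂ} (hu : Continuous u) (a b : ℝ) :
    IntervalIntegrable (fun t => ((V t : ℂ) - E) * u t) volume a b :=
  have h := hV.intervalIntegrable a b
  ((show IntervalIntegrable (fun t => (V t : ℂ)) volume a b from ⟨h.1.ofReal, h.2.ofReal⟩).sub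
    intervalIntegrable_const).mul_continuousOn hu.continuousOn

theorem neg_mul_le_integral_re_potential_mul {V : ℝ → ℝ} (hV : LocallyIntegrable V volume)
    {C₁ : ℝ} (hC₁ : ∀ a, ∫ t in a..a + 1, max (-V t) 0 ≤ C₁) (E : ℂ) {u : ℝ → ℂ}
    (hu : Continuous u) {w : ℂ} {x y K : ℝ} (hpos : ∀ t ∈ Icc x y, 0 ≤ (w * u t).re)
    (hK : ∀ t ∈ Icc x y, ‖w * u t‖ ≤ K) {s : ℝ} (hs : s ∈ Icc x y) :
    -((C₁ + ‖E‖) * (y - x + 1) * K) ≤ ∫ t in x..s, (w * ((V t - E) * u t)).re := by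
  have hK0 : 0 ≤ K := (norm_nonneg _).trans (hK x ⟨le_rfl, hs.1.trans hs.2⟩)
  have hVneg := intervalIntegrable_negPart_of_locallyIntegrable hV
  have hint := ((intervalIntegrable_potential_mul hV E hu x s).const_mul w)
  have hmono : ∫ t in x..s, -((max (-V t) 0 + ‖E‖) * K)
      ≤ ∫ t in x..s, (w * ((V t - E) * u t)).re :=
    intervalIntegral.integral_mono_on hs.1
      (((hVneg x s).add intervalIntegrable_const).mul_const K).neg ⟨hint.1.re, hint.2.re⟩
      fun t ht => by
        have ht' : t ∈ Icc x y := ⟨ht.1, ht.2.trans hs.2⟩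
        refine le_trans ?_ (neg_mul_norm_le_re_mul_sub_mul (hpos t ht'))
        exact neg_le_neg (mul_le_mul_of_nonneg_left (hK t ht') (by positivity))
  have heval : ∫ t in x..s, -((max (-V t) 0 + ‖E‖) * K)
      = -(((∫ t in x..s, max (-V t) 0) + ‖E‖ * (s - x)) * K) := by
    rw [intervalIntegral.integral_neg, intervalIntegral.integral_mul_const,
      intervalIntegral.integral_add (hVneg x s) intervalIntegrable_const,
      intervalIntegral.integral_const, smul_eq_mul, mul_comm (s - x)]
  have hVbound : ∫ t in x..s, max (-V t) 0 ≤ C₁ * (y - x + 1) :=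
    integral_le_mul_add_one (fun t => le_max_right _ _) hVneg hC₁ hs.1 (by linarith [hs.2])
  have hEbound : ‖E‖ * (s - x) ≤ ‖E‖ * (y - x + 1) :=
    mul_le_mul_of_nonneg_left (by linarith [hs.2]) (norm_nonneg E)
  rw [heval] at hmono
  nlinarith

theorem stmt_0_general
    (V : ℝ → ℝ)
    (hVloc : LocallyIntegrable V volume)
    (C₁ : ℝ)
    (hC₁ : IsLUB (Set.range fun x : ℝ => ∫ y in x..x + 1, max (-V y) 0) C₁)
    (E : ℂ) (u u' : ℝ → ℂ)
    (hu : ∀ x : ℝ, HasDerivAt u (u' x) x)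
    (heq : ∀ a b : ℝ, a ≤ b →
      u' b - u' a = ∫ t in a..b, ((V t : ℂ) - E) * u t)
    (C₂ : ℝ) (hC₂ : C₂ = C₁ + ‖E‖)
    (x y : ℝ) (hxy : x < y) (ω : ℂ)
    (hpos : ∀ t ∈ Icc x y, 0 ≤ (starRingEnd ℂ ω * u t).re)
    (M : ℝ) (hM : IsGreatest ((fun t => ‖u t‖) '' Icc x y) M) :
    (starRingEnd ℂ ω * u x).re + (y - x) * (starRingEnd ℂ ω * u' x).re
      - C₂ * (y - x) * (y - x + 1) * ‖ω‖ * M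
      ≤ (starRingEnd ℂ ω * u y).re := by
  set w := starRingEnd ℂ ω
  have hucont : Continuous u := continuous_iff_continuousAt.2 fun t => (hu t).continuousAt
  have hK : ∀ t ∈ Icc x y, ‖w * u t‖ ≤ ‖ω‖ * M := fun t ht => by
    rw [norm_mul, Complex.norm_conj]
    exact mul_le_mul_of_nonneg_left (hM.2 ⟨t, ht, rfl⟩) (norm_nonneg ω)
  have hderiv : ∀ t, HasDerivAt (fun t => (w * u t).re) (w * u' t).re t := fun t =>
    Complex.reCLM.hasFDerivAt.comp_hasDerivAt t ((hu t).const_mul w)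
  have hincr : ∀ s ∈ Icc x y,
      -(C₂ * (y - x + 1) * (‖ω‖ * M)) ≤ (w * u' s).re - (w * u' x).re := fun s hs => by
    rw [← Complex.sub_re, ← mul_sub, heq x s hs.1, ← intervalIntegral.integral_const_mul,
      ← Complex.reCLM_apply, ← Complex.reCLM.intervalIntegral_comp_comm
        ((intervalIntegrable_potential_mul hVloc E hucont x s).const_mul w), hC₂]
    exact neg_mul_le_integral_re_potential_mul hVloc (fun a => hC₁.1 ⟨a, rfl⟩) E hucont hpos hK hs
  linarith [add_mul_deriv_sub_mul_le hderiv hxy.le hincr]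

/-- Lemma 3.1 (part): for a solution `u` of `-u'' + V u = E u` with the negative
part of `V` uniformly locally `L¹`, if `Re(conj ω · u(t)) ≥ 0` on `[x, y]`, then
`Re(conj ω · u(y)) ≥ Re(conj ω · u(x)) + (y - x) Re(conj ω · u'(x))
  - C₂ (y-x)(y-x+1) |ω| M` where `M = max_{[x,y]} |u|`. -/
theorem stmt_0
    (V : ℝ → ℝ) (hVmeas : Measurable V)
    (hVloc : LocallyIntegrable V volume)
    (C₁ : ℝ)
    (hC₁ : IsLUB (Set.range fun x : ℝ => ∫ y in x..x + 1, max (-V y) 0) C₁)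
    (E : ℂ) (u u' : ℝ → ℂ)
    (hu : ∀ x : ℝ, HasDerivAt u (u' x) x)
    (heq : ∀ a b : ℝ, a ≤ b →
      u' b - u' a = ∫ t in a..b, ((V t : ℂ) - E) * u t)
    (C₂ : ℝ) (hC₂ : C₂ = C₁ + ‖E‖)
    (x y : ℝ) (hxy : x < y) (ω : ℂ)
    (hpos : ∀ t ∈ Icc x y, 0 ≤ (starRingEnd ℂ ω * u t).re)
    (M : ℝ) (hM : IsGreatest ((fun t => ‖u t‖) '' Icc x y) M) :
    (starRingEnd ℂ ω * u x).re + (y - x) * (starRingEnd ℂ ω * u' x).re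
      - C₂ * (y - x) * (y - x + 1) * ‖ω‖ * M
      ≤ (starRingEnd ℂ ω * u y).re :=
  stmt_0_general V hVloc C₁ hC₁ E u u' hu heq C₂ hC₂ x y hxy ω hpos M hM
end

section
/- Let x < y be real numbers, let ω ∈ ℂ, and set M := max_{t ∈ [x,y]} |u(t)|. Assume that Re(conj(ω)·u(t)) ≥ 0 for all t ∈ [x, y]. Then Re(conj(ω)·∫_x^y (y − s)·(V(s) − E)·u(s) ds) ≥ −|ω|·M·(y − x)·(y − x + 1)·C₂. -/
/-!
Write `V = V₊ - V₋`. On `[x, y]` the weight `y - s` and `V₊` are nonnegative, so by the sign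
condition the `V₊`-part of the integrand has nonnegative real part after multiplying by `conj ω`;
the remaining part has modulus at most `|ω| M (y - x) (V₋(s) + |E|)`. Finally `[x, y]` is covered by
`⌈y - x⌉ ≤ y - x + 1` unit intervals, on each of which `V₋` has integral at most `C₁`.
-/

open MeasureTheory Set

lemma MeasureTheory.LocallyIntegrable.neg_part {X : Type*} [MeasurableSpace X]
    [TopologicalSpace X] {μ : Measure X} {f : X → ℝ} (hf : LocallyIntegrable f μ) :
    LocallyIntegrable (fun x => max (-f x) 0) μ := fun x =>
  let ⟨s, hs, hfs⟩ := hf x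
  ⟨s, hs, hfs.neg_part⟩

section UnitIntervalBound

variable {f : ℝ → ℝ} {C : ℝ}

lemma integral_add_nat_le_nat_mul (hf : LocallyIntegrable f volume)
    (hC : ∀ a, ∫ s in a..a + 1, f s ≤ C) (x : ℝ) (n : ℕ) :
    ∫ s in x..x + n, f s ≤ n * C := by
  have hint (a b : ℝ) : IntervalIntegrable f volume a b :=
    (hf.integrableOn_isCompact isCompact_uIcc).intervalIntegrable
  induction n with
  | zero => simp
  | succ n ih =>
    rw [← intervalIntegral.integral_add_adjacent_intervals (hint x (x + n)) (hint _ _)]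
    push_cast
    rw [← add_assoc]
    linarith [hC (x + n)]

lemma integral_le_mul_of_forall_integral_unit_le (hf₀ : ∀ s, 0 ≤ f s)
    (hf : LocallyIntegrable f volume) (hC : ∀ a, ∫ s in a..a + 1, f s ≤ C)
    {x y : ℝ} (hxy : x ≤ y) :
    ∫ s in x..y, f s ≤ (y - x + 1) * C := by
  have hC₀ : 0 ≤ C :=
    (intervalIntegral.integral_nonneg (by norm_num) fun s _ => hf₀ s).trans (hC 0)
  have hint (a b : ℝ) : IntervalIntegrable f volume a b :=
    (hf.integrableOn_isCompact isCompact_uIcc).intervalIntegrable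
  set n := ⌈y - x⌉₊
  have hyn : y ≤ x + n := by linarith [Nat.le_ceil (y - x)]
  have hn : (n : ℝ) ≤ y - x + 1 := (Nat.ceil_lt_add_one (sub_nonneg.2 hxy)).le
  calc ∫ s in x..y, f s ≤ ∫ s in x..x + n, f s :=
        intervalIntegral.integral_mono_interval le_rfl hxy hyn
          (Filter.Eventually.of_forall hf₀) (hint _ _)
    _ ≤ n * C := integral_add_nat_le_nat_mul hf hC x n
    _ ≤ (y - x + 1) * C := mul_le_mul_of_nonneg_right hn hC₀

end UnitIntervalBound

lemma neg_mul_le_re_mul_ofReal_mul_sub {w z e : ℂ} {a r : ℝ} (hr : 0 ≤ r)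
    (hwz : 0 ≤ (w * z).re) :
    -(‖w‖ * ‖z‖ * r * (max (-a) 0 + ‖e‖)) ≤ (w * (r * (a - e) * z)).re := by
  have hsplit : w * (r * (a - e) * z)
      = ((r * max a 0 : ℝ) : ℂ) * (w * z) + w * (r * ((-max (-a) 0 : ℝ) - e) * z) := by
    have ha : a = max a 0 - max (-a) 0 := (max_zero_sub_max_neg_zero_eq_self a).symm
    conv_lhs => rw [ha]
    push_cast
    ring
  have hnorm : ‖((-max (-a) 0 : ℝ) : ℂ) - e‖ ≤ max (-a) 0 + ‖e‖ := by
    refine (norm_sub_le _ _).trans_eq ?_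
    rw [Complex.norm_real, norm_neg, Real.norm_of_nonneg (le_max_right _ _)]
  have hrest : ‖w * (r * ((-max (-a) 0 : ℝ) - e) * z)‖
      ≤ ‖w‖ * ‖z‖ * r * (max (-a) 0 + ‖e‖) := by
    rw [norm_mul, norm_mul, norm_mul, Complex.norm_real, Real.norm_of_nonneg hr]
    calc ‖w‖ * (r * ‖((-max (-a) 0 : ℝ) : ℂ) - e‖ * ‖z‖)
        = ‖w‖ * ‖z‖ * r * ‖((-max (-a) 0 : ℝ) : ℂ) - e‖ := by ring
      _ ≤ ‖w‖ * ‖z‖ * r * (max (-a) 0 + ‖e‖) := by gcongr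
  rw [hsplit, Complex.add_re, Complex.re_ofReal_mul]
  have hpos : 0 ≤ r * max a 0 * (w * z).re := by positivity
  linarith [neg_le_of_abs_le ((Complex.abs_re_le_norm _).trans hrest)]

lemma integral_le_re_intervalIntegral {f : ℝ → ℂ} {g : ℝ → ℝ} {a b : ℝ} (hab : a ≤ b)
    (hf : IntervalIntegrable f volume a b) (hg : IntervalIntegrable g volume a b)
    (hgf : ∀ s ∈ Icc a b, g s ≤ (f s).re) :
    ∫ s in a..b, g s ≤ (∫ s in a..b, f s).re := by
  rw [← Complex.reCLM_apply, ← Complex.reCLM.intervalIntegral_comp_comm hf]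
  exact intervalIntegral.integral_mono_on hab hg ⟨hf.1.re, hf.2.re⟩ hgf

lemma neg_le_re_mul_integral_sub_mul_potential {V : ℝ → ℝ} {u : ℝ → ℂ} {E w : ℂ} {x y M : ℝ}
    (hxy : x ≤ y) (hV : IntervalIntegrable V volume x y) (hu : Continuous u)
    (hM : ∀ t ∈ Icc x y, ‖u t‖ ≤ M) (hpos : ∀ t ∈ Icc x y, 0 ≤ (w * u t).re) :
    -(‖w‖ * M * (y - x) * ((∫ s in x..y, max (-V s) 0) + (y - x) * ‖E‖))
      ≤ (w * ∫ s in x..y, ((y : ℂ) - s) * ((V s : ℂ) - E) * u s).re := by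
  have hVneg : IntervalIntegrable (fun s => max (-V s) 0) volume x y :=
    ⟨hV.1.neg_part, hV.2.neg_part⟩
  have hint : IntervalIntegrable (fun s => ((y : ℂ) - s) * ((V s : ℂ) - E) * u s) volume x y :=
    have hVC : IntervalIntegrable (fun s => (V s : ℂ)) volume x y := ⟨hV.1.ofReal, hV.2.ofReal⟩
    ((hVC.sub intervalIntegrable_const).continuousOn_mul
      (by fun_prop)).mul_continuousOn hu.continuousOn
  have hM₀ : 0 ≤ M := (norm_nonneg _).trans (hM x ⟨le_rfl, hxy⟩)
  have hbound (s) (hs : s ∈ Icc x y) : -(‖w‖ * M * (y - x) * (max (-V s) 0 + ‖E‖))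
      ≤ (w * (((y : ℂ) - s) * ((V s : ℂ) - E) * u s)).re := by
    have key := neg_mul_le_re_mul_ofReal_mul_sub (e := E) (a := V s) (sub_nonneg.2 hs.2)
      (hpos s hs)
    push_cast at key
    refine le_trans ?_ key
    gcongr -(‖w‖ * ?_ * ?_ * _)
    · exact sub_nonneg.2 hs.2
    · exact hM s hs
    · linarith [hs.1]
  calc -(‖w‖ * M * (y - x) * ((∫ s in x..y, max (-V s) 0) + (y - x) * ‖E‖))
      = ∫ s in x..y, -(‖w‖ * M * (y - x) * (max (-V s) 0 + ‖E‖)) := by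
        rw [intervalIntegral.integral_neg, intervalIntegral.integral_const_mul,
          intervalIntegral.integral_add hVneg intervalIntegrable_const,
          intervalIntegral.integral_const, smul_eq_mul]
    _ ≤ _ := by
        rw [← intervalIntegral.integral_const_mul]
        exact integral_le_re_intervalIntegral hxy (hint.const_mul _)
          ((hVneg.add intervalIntegrable_const).const_mul _).neg hbound

theorem stmt_1_general
    (V : ℝ → ℝ)
    (hVloc : LocallyIntegrable V volume)
    (C₁ : ℝ)
    (hC₁ : IsLUB (Set.range fun x : ℝ => ∫ y in x..x + 1, max (-V y) 0) C₁)
    (E : ℂ) (u u' : ℝ → ℂ)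
    (hu : ∀ x : ℝ, HasDerivAt u (u' x) x)
    (C₂ : ℝ) (hC₂ : C₂ = C₁ + ‖E‖)
    (x y : ℝ) (hxy : x < y) (ω : ℂ)
    (M : ℝ) (hM : IsGreatest ((fun t => ‖u t‖) '' Icc x y) M)
    (hpos : ∀ t ∈ Icc x y, 0 ≤ (starRingEnd ℂ ω * u t).re) :
    -(‖ω‖ * M * (y - x) * (y - x + 1) * C₂)
      ≤ (starRingEnd ℂ ω * ∫ s in x..y, ((y : ℂ) - s) * ((V s : ℂ) - E) * u s).re := by
  have hu_cont : Continuous u := continuous_iff_continuousAt.2 fun t => (hu t).continuousAt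
  have hVneg_le : ∫ s in x..y, max (-V s) 0 ≤ (y - x + 1) * C₁ :=
    integral_le_mul_of_forall_integral_unit_le (fun _ => le_max_right _ _) hVloc.neg_part
      (fun a => hC₁.1 ⟨a, rfl⟩) hxy.le
  have hlower := neg_le_re_mul_integral_sub_mul_potential (E := E) hxy.le
    (hVloc.integrableOn_isCompact isCompact_uIcc).intervalIntegrable hu_cont
    (fun t ht => hM.2 ⟨t, ht, rfl⟩) hpos
  rw [Complex.norm_conj] at hlower
  have hM₀ : 0 ≤ M := (norm_nonneg _).trans (hM.2 ⟨x, ⟨le_rfl, hxy.le⟩, rfl⟩)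
  refine le_trans ?_ hlower
  have hfactor : 0 ≤ ‖ω‖ * M * (y - x) :=
    mul_nonneg (mul_nonneg (norm_nonneg _) hM₀) (sub_nonneg.2 hxy.le)
  rw [hC₂, mul_assoc _ (y - x + 1)]
  gcongr
  nlinarith [norm_nonneg E]

/-- Lemma 3.1 (integral remainder estimate): under the sign condition
`Re(conj ω · u(t)) ≥ 0` on `[x, y]`,
`Re(conj ω · ∫_x^y (y - s)(V(s) - E) u(s) ds) ≥ -|ω| M (y-x)(y-x+1) C₂`. -/
theorem stmt_1
    (V : ℝ → ℝ) (hVmeas : Measurable V)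
    (hVloc : LocallyIntegrable V volume)
    (C₁ : ℝ)
    (hC₁ : IsLUB (Set.range fun x : ℝ => ∫ y in x..x + 1, max (-V y) 0) C₁)
    (E : ℂ) (u u' : ℝ → ℂ)
    (hu : ∀ x : ℝ, HasDerivAt u (u' x) x)
    (heq : ∀ a b : ℝ, a ≤ b →
      u' b - u' a = ∫ t in a..b, ((V t : ℂ) - E) * u t)
    (C₂ : ℝ) (hC₂ : C₂ = C₁ + ‖E‖)
    (x y : ℝ) (hxy : x < y) (ω : ℂ)
    (M : ℝ) (hM : IsGreatest ((fun t => ‖u t‖) '' Icc x y) M)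
    (hpos : ∀ t ∈ Icc x y, 0 ≤ (starRingEnd ℂ ω * u t).re) :
    -(‖ω‖ * M * (y - x) * (y - x + 1) * C₂)
      ≤ (starRingEnd ℂ ω * ∫ s in x..y, ((y : ℂ) - s) * ((V s : ℂ) - E) * u s).re :=
  stmt_1_general V hVloc C₁ hC₁ E u u' hu C₂ hC₂ x y hxy ω M hM hpos
end

section
/- For every real p with 1 ≤ p < ∞ and every x ∈ ℝ, |u(x)|^p ≤ (2^p/δ) · ∫_{x−δ}^{x+δ} |u(y)|^p dy, where δ := −1/2 + √(1/4 + 1/(2·C₂)). -/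
open MeasureTheory Set

/-!
Suppose both `[x - δ, x]` and `[x, x + δ]` contain a point where `‖u‖ < ‖u x‖ / 2`. Between these
two points `‖u‖` attains its maximum `M ≥ ‖u x‖` at an interior point `z`. The function
`g y = Re (conj (u z) * u y)` has `g z = M²`, `g' z = 0`, and the equation gives
`g'' ≥ -M² (V₋ + ‖E‖)` as long as `g ≥ 0`. The choice of `δ` makes `(∫ (V₋ + ‖E‖)) * (length)`
at most `δ (δ + 1) C₂ = 1/2` on intervals of length `≤ δ`, so `g ≥ M²/2` on `[z, z ± δ]` and
hence `‖u‖ ≥ M/2 ≥ ‖u x‖/2` at the point on the far side of `z`, a contradiction. So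
`‖u‖ ≥ ‖u x‖/2` on one of the two half-intervals, and integrating over it gives the bound.
-/

open Filter Topology ComplexConjugate

theorem forall_Icc_le_of_nonneg_imp_le {g : ℝ → ℝ} {a b L : ℝ} (hg : ContinuousOn g (Icc a b))
    (hL : 0 < L) (ha : L ≤ g a) (h : ∀ y ∈ Icc a b, (∀ t ∈ Icc a y, 0 ≤ g t) → L ≤ g y) :
    ∀ y ∈ Icc a b, L ≤ g y := by
  have hs : IsClosed ({y | L ≤ g y} ∩ Icc a b) := by
    rw [inter_comm]; exact hg.preimage_isClosed_of_isClosed isClosed_Icc isClosed_Ici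
  refine hs.Icc_subset_of_forall_mem_nhdsGT_of_Icc_subset ha fun t ht hat => ?_
  have hpos : ∀ᶠ y in 𝓝[>] t, 0 < g y :=
    ((hg t (Ico_subset_Icc_self ht)).mono_of_mem_nhdsWithin
      (Icc_mem_nhdsGT_of_mem ht)).eventually_const_lt (hL.trans_le (hat ⟨ht.1, le_rfl⟩))
  obtain ⟨m, htm, hm⟩ := mem_nhdsGT_iff_exists_Ioo_subset.1 (hpos.and (Ioc_mem_nhdsGT ht.2))
  filter_upwards [Ioo_mem_nhdsGT htm] with y hy
  refine h y ⟨ht.1.trans (hm hy).2.1.le, (hm hy).2.2⟩ fun s hs => ?_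
  rcases le_or_gt s t with hst | hst
  · exact hL.le.trans (hat ⟨hs.1, hst⟩)
  · exact (hm ⟨hst, hs.2.trans_lt hy.2⟩).1.le

theorem half_le_of_forall_neg_mul_le_deriv {g g' : ℝ → ℝ} {a b m B : ℝ} (hab : a ≤ b)
    (hg : ∀ y ∈ Icc a b, HasDerivAt g (g' y) y) (hga : g a = m) (hm : 0 < m) (hB : 0 ≤ B)
    (hBab : B * (b - a) ≤ 1 / 2)
    (hg' : ∀ s ∈ Icc a b, (∀ t ∈ Icc a s, 0 ≤ g t) → -(m * B) ≤ g' s) :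
    m / 2 ≤ g b := by
  have hcont : ContinuousOn g (Icc a b) := fun y hy => (hg y hy).continuousAt.continuousWithinAt
  refine forall_Icc_le_of_nonneg_imp_le hcont (half_pos hm) (by linarith)
    (fun y hy hnonneg => ?_) b ⟨hab, le_rfl⟩
  rcases hy.1.eq_or_lt with rfl | hay
  · linarith
  obtain ⟨ξ, hξ, hslope⟩ := exists_hasDerivAt_eq_slope g g' hay
    (hcont.mono (Icc_subset_Icc_right hy.2)) fun ξ hξ => hg ξ ⟨hξ.1.le, hξ.2.le.trans hy.2⟩
  have hξ' := hg' ξ ⟨hξ.1.le, hξ.2.le.trans hy.2⟩ fun t ht => hnonneg t ⟨ht.1, ht.2.trans hξ.2.le⟩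
  have hBy : B * (y - a) ≤ 1 / 2 :=
    (mul_le_mul_of_nonneg_left (by linarith [hy.2]) hB).trans hBab
  rw [eq_div_iff (sub_pos.2 hay).ne'] at hslope
  nlinarith [mul_le_mul_of_nonneg_right hξ' (sub_pos.2 hay).le]

structure IsSchrodingerSolution (V : ℝ → ℝ) (E : ℂ) (u u' : ℝ → ℂ) : Prop where
  hasDerivAt : ∀ x, HasDerivAt u (u' x) x
  deriv_sub_deriv : ∀ a b, a ≤ b → u' b - u' a = ∫ t in a..b, ((V t : ℂ) - E) * u t

theorem re_conj_mul_eq_zero_of_isLocalMax {u : ℝ → ℂ} {u'z : ℂ} {z : ℝ}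
    (hu : HasDerivAt u u'z z) (hmax : IsLocalMax (fun y => ‖u y‖) z) :
    (conj (u z) * u'z).re = 0 := by
  have hsq : IsLocalMax (fun y => ‖u y‖ ^ 2) z := by
    filter_upwards [hmax] with y hy using pow_le_pow_left₀ (norm_nonneg _) hy 2
  have := hsq.hasDerivAt_eq_zero hu.norm_sq
  rw [Complex.inner, mul_comm u'z] at this
  linarith

namespace IsSchrodingerSolution

variable {V : ℝ → ℝ} {E : ℂ} {u u' : ℝ → ℂ}

theorem continuous (h : IsSchrodingerSolution V E u u') : Continuous u :=
  continuous_iff_continuousAt.2 fun x => (h.hasDerivAt x).continuousAt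

theorem comp_neg (h : IsSchrodingerSolution V E u u') :
    IsSchrodingerSolution (fun x => V (-x)) E (fun x => u (-x)) (fun x => -u' (-x)) where
  hasDerivAt x := by
    have := (h.hasDerivAt (-x)).scomp x (hasDerivAt_neg x)
    rwa [neg_one_smul] at this
  deriv_sub_deriv a b hab := by
    rw [intervalIntegral.integral_comp_neg (fun t => ((V t : ℂ) - E) * u t),
      ← h.deriv_sub_deriv _ _ (neg_le_neg hab)]
    ring

theorem neg_mul_integral_le_re_mul_deriv_sub (h : IsSchrodingerSolution V E u u') {a b K : ℝ}
    (hab : a ≤ b) (hV : IntervalIntegrable V volume a b) (c : ℂ)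
    (hpos : ∀ t ∈ Icc a b, 0 ≤ (c * u t).re) (hK : ∀ t ∈ Icc a b, ‖c * u t‖ ≤ K) :
    -(K * ∫ t in a..b, (max (-V t) 0 + ‖E‖)) ≤ (c * u' b).re - (c * u' a).re := by
  have hf : IntervalIntegrable (fun t => c * (((V t : ℂ) - E) * u t)) volume a b :=
    ((IntervalIntegrable.sub (f := fun t => (V t : ℂ)) ⟨hV.1.ofReal, hV.2.ofReal⟩
      intervalIntegrable_const).mul_continuousOn
      h.continuous.continuousOn).const_mul c
  have hW : IntervalIntegrable (fun t => max (-V t) 0 + ‖E‖) volume a b :=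
    IntervalIntegrable.add ⟨hV.1.neg_part, hV.2.neg_part⟩ intervalIntegrable_const
  calc -(K * ∫ t in a..b, (max (-V t) 0 + ‖E‖))
      = ∫ t in a..b, -(K * (max (-V t) 0 + ‖E‖)) := by
        rw [intervalIntegral.integral_neg, intervalIntegral.integral_const_mul]
    _ ≤ ∫ t in a..b, (c * (((V t : ℂ) - E) * u t)).re := by
        refine intervalIntegral.integral_mono_on hab (hW.const_mul K).neg
          ⟨hf.1.re, hf.2.re⟩ fun t ht => ?_
        have hre : (c * (((V t : ℂ) - E) * u t)).re = V t * (c * u t).re - (E * (c * u t)).re := by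
          rw [show c * (((V t : ℂ) - E) * u t) = V t * (c * u t) - E * (c * u t) by ring,
            Complex.sub_re, Complex.re_ofReal_mul]
        have hE : (E * (c * u t)).re ≤ ‖E‖ * K :=
          (Complex.re_le_norm _).trans (by rw [norm_mul]; gcongr; exact hK t ht)
        have hr : (c * u t).re ≤ K := (Complex.re_le_norm _).trans (hK t ht)
        have hVV : 0 ≤ V t + max (-V t) 0 := by linarith [le_max_left (-V t) 0]
        rw [hre]
        nlinarith [mul_nonneg hVV (hpos t ht), mul_nonneg (le_max_right (-V t) 0) (sub_nonneg.2 hr)]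
    _ = (c * u' b).re - (c * u' a).re := by
        have hre := Complex.reCLM.intervalIntegral_comp_comm hf
        simp only [Complex.reCLM_apply] at hre
        rw [hre, intervalIntegral.integral_const_mul, ← h.deriv_sub_deriv a b hab, mul_sub,
          Complex.sub_re]

theorem half_norm_le_norm_of_le (h : IsSchrodingerSolution V E u u') {z d : ℝ}
    (hzd : z ≤ d) (hV : IntervalIntegrable V volume z d) (hmax : ∀ t ∈ Icc z d, ‖u t‖ ≤ ‖u z‖)
    (hcrit : (conj (u z) * u' z).re = 0)
    (hsmall : (∫ t in z..d, (max (-V t) 0 + ‖E‖)) * (d - z) ≤ 1 / 2) :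
    ‖u z‖ / 2 ≤ ‖u d‖ := by
  rcases (norm_nonneg (u z)).eq_or_lt with h0 | hpos
  · rw [← h0, zero_div]; exact norm_nonneg _
  have hnorm : ∀ t, ‖conj (u z) * u t‖ = ‖u z‖ * ‖u t‖ := by simp
  have hK : ∀ t ∈ Icc z d, ‖conj (u z) * u t‖ ≤ ‖u z‖ ^ 2 := fun t ht => by
    rw [hnorm, sq]; exact mul_le_mul_of_nonneg_left (hmax t ht) hpos.le
  have hW : IntervalIntegrable (fun t => max (-V t) 0 + ‖E‖) volume z d :=
    IntervalIntegrable.add ⟨hV.1.neg_part, hV.2.neg_part⟩ intervalIntegrable_const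
  have hg'bound : ∀ s ∈ Icc z d, (∀ t ∈ Icc z s, 0 ≤ (conj (u z) * u t).re) →
      -(‖u z‖ ^ 2 * ∫ t in z..d, (max (-V t) 0 + ‖E‖)) ≤ (conj (u z) * u' s).re := by
    intro s hs hnonneg
    have hWs : ∫ t in z..s, (max (-V t) 0 + ‖E‖) ≤ ∫ t in z..d, (max (-V t) 0 + ‖E‖) :=
      intervalIntegral.integral_mono_interval le_rfl hs.1 hs.2
        (ae_of_all _ fun t => by positivity) hW
    have := h.neg_mul_integral_le_re_mul_deriv_sub hs.1
      (hV.mono_set (uIcc_subset_uIcc_left (by rw [uIcc_of_le hzd]; exact hs))) (conj (u z))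
      hnonneg fun t ht => hK t ⟨ht.1, ht.2.trans hs.2⟩
    nlinarith [mul_le_mul_of_nonneg_left hWs (sq_nonneg ‖u z‖)]
  have hhalf := half_le_of_forall_neg_mul_le_deriv (g := fun y => (conj (u z) * u y).re) hzd
    (fun y _ => Complex.reCLM.hasFDerivAt.comp_hasDerivAt y ((h.hasDerivAt y).const_mul _))
    (by rw [Complex.conj_mul']; norm_cast) (by positivity)
    (intervalIntegral.integral_nonneg hzd fun t _ => by positivity) hsmall hg'bound
  have hd : (conj (u z) * u d).re ≤ ‖u z‖ * ‖u d‖ := (Complex.re_le_norm _).trans (hnorm d).le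
  nlinarith

theorem half_norm_le_norm_of_ge (h : IsSchrodingerSolution V E u u') {z d : ℝ}
    (hdz : d ≤ z) (hV : IntervalIntegrable V volume d z) (hmax : ∀ t ∈ Icc d z, ‖u t‖ ≤ ‖u z‖)
    (hcrit : (conj (u z) * u' z).re = 0)
    (hsmall : (∫ t in d..z, (max (-V t) 0 + ‖E‖)) * (z - d) ≤ 1 / 2) :
    ‖u z‖ / 2 ≤ ‖u d‖ := by
  have := h.comp_neg.half_norm_le_norm_of_le (neg_le_neg hdz)
    ((IntervalIntegrable.iff_comp_neg).1 hV.symm) (fun t ht => by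
      simpa using hmax (-t) ⟨le_neg_of_le_neg ht.2, neg_le.1 ht.1⟩)
    (by simp only [neg_neg, mul_neg, Complex.neg_re, hcrit, neg_zero])
    (by rwa [intervalIntegral.integral_comp_neg (fun t => max (-V t) 0 + ‖E‖), neg_neg, neg_neg,
      neg_sub_neg])
  simpa using this

theorem exists_Icc_half_norm_le (h : IsSchrodingerSolution V E u u')
    (hV : ∀ a b, IntervalIntegrable V volume a b) {δ : ℝ} (hδ : 0 ≤ δ)
    (hsmall : ∀ a b, a ≤ b → b - a ≤ δ →
      (∫ t in a..b, (max (-V t) 0 + ‖E‖)) * (b - a) ≤ 1 / 2) (x : ℝ) :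
    ∃ a ∈ Icc (x - δ) x, ∀ y ∈ Icc a (a + δ), ‖u x‖ / 2 ≤ ‖u y‖ := by
  by_contra! hcon
  obtain ⟨yr, hyr, hyr'⟩ := hcon x ⟨by linarith, le_rfl⟩
  obtain ⟨yl, hyl, hyl'⟩ := hcon (x - δ) ⟨le_rfl, by linarith⟩
  have hx : x ∈ Icc yl yr := ⟨by linarith [hyl.2], hyr.1⟩
  obtain ⟨z, hz, hzmax⟩ :=
    isCompact_Icc.exists_isMaxOn ⟨x, hx⟩ (continuous_norm.comp h.continuous).continuousOn
  have hxz : ‖u x‖ ≤ ‖u z‖ := hzmax hx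
  have hux : 0 ≤ ‖u x‖ := norm_nonneg _
  have hylz : yl < z := hz.1.lt_of_ne (by rintro rfl; linarith)
  have hzyr : z < yr := hz.2.lt_of_ne (by rintro rfl; linarith)
  have hcrit := re_conj_mul_eq_zero_of_isLocalMax (h.hasDerivAt z)
    (hzmax.isLocalMax (Icc_mem_nhds hylz hzyr))
  rcases le_total x z with hxz' | hzx
  · have := h.half_norm_le_norm_of_le hzyr.le (hV z yr)
      (fun t ht => hzmax ⟨hylz.le.trans ht.1, ht.2⟩) hcrit
      (hsmall z yr hzyr.le (by linarith [hyr.2]))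
    linarith
  · have := h.half_norm_le_norm_of_ge hylz.le (hV yl z)
      (fun t ht => hzmax ⟨ht.1, ht.2.trans hzyr.le⟩) hcrit
      (hsmall yl z hylz.le (by linarith [hyl.1]))
    linarith

end IsSchrodingerSolution

theorem integral_le_of_forall_integral_unit_le {f : ℝ → ℝ} {C a b : ℝ}
    (hf : ∀ a b, IntervalIntegrable f volume a b) (hf0 : ∀ t, 0 ≤ f t)
    (hC : ∀ x, ∫ t in x..x + 1, f t ≤ C) (hab : a ≤ b) :
    ∫ t in a..b, f t ≤ (b - a + 1) * C := by
  have hC0 : 0 ≤ C := (intervalIntegral.integral_nonneg (by linarith) fun t _ => hf0 t).trans (hC 0)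
  have hnat : ∀ n : ℕ, ∫ t in a..a + n, f t ≤ n * C := by
    intro n
    induction n with
    | zero => simp
    | succ n ih =>
      rw [← intervalIntegral.integral_add_adjacent_intervals (hf _ _) (hf _ _), Nat.cast_succ,
        ← add_assoc]
      linarith [hC (a + n)]
  have hceil : b ≤ a + ⌈b - a⌉₊ := by linarith [Nat.le_ceil (b - a)]
  calc ∫ t in a..b, f t ≤ ∫ t in a..a + ⌈b - a⌉₊, f t :=
        intervalIntegral.integral_mono_interval le_rfl hab hceil (ae_of_all _ hf0) (hf _ _)
    _ ≤ ⌈b - a⌉₊ * C := hnat _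
    _ ≤ (b - a + 1) * C := by
        gcongr; exact (Nat.ceil_lt_add_one (sub_nonneg.2 hab)).le

theorem integral_add_const_mul_le_half {f : ℝ → ℝ} {C c δ : ℝ}
    (hf : ∀ a b, IntervalIntegrable f volume a b) (hf0 : ∀ t, 0 ≤ f t)
    (hC : ∀ x, ∫ t in x..x + 1, f t ≤ C) (hc : 0 ≤ c) (hδ : δ * (δ + 1) * (C + c) = 1 / 2)
    {a b : ℝ} (hab : a ≤ b) (hbaδ : b - a ≤ δ) :
    (∫ t in a..b, (f t + c)) * (b - a) ≤ 1 / 2 := by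
  have hfab := integral_le_of_forall_integral_unit_le hf hf0 hC hab
  have hC0 : 0 ≤ C := (intervalIntegral.integral_nonneg (by linarith) fun t _ => hf0 t).trans (hC 0)
  rw [intervalIntegral.integral_add (hf a b) intervalIntegrable_const,
    intervalIntegral.integral_const, smul_eq_mul, ← hδ]
  have hba : 0 ≤ b - a := sub_nonneg.2 hab
  calc ((∫ t in a..b, f t) + (b - a) * c) * (b - a)
      ≤ ((b - a + 1) * C + (b - a + 1) * c) * (b - a) := by gcongr; linarith
    _ ≤ δ * (δ + 1) * (C + c) := by
        rw [← mul_add, mul_comm, ← mul_assoc]; gcongr; linarith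

theorem pos_and_mul_add_one_mul_eq_half {C δ : ℝ} (hC : 0 < C)
    (hδ : δ = -(1 / 2) + Real.sqrt (1 / 4 + 1 / (2 * C))) :
    0 < δ ∧ δ * (δ + 1) * C = 1 / 2 := by
  have hsq := Real.sq_sqrt (by positivity : (0 : ℝ) ≤ 1 / 4 + 1 / (2 * C))
  have hpos : (0 : ℝ) < 1 / (2 * C) := by positivity
  have hgt : 1 / 2 < Real.sqrt (1 / 4 + 1 / (2 * C)) := Real.lt_sqrt_of_sq_lt (by linarith)
  have hδδ : δ * (δ + 1) = Real.sqrt (1 / 4 + 1 / (2 * C)) ^ 2 - 1 / 4 := by rw [hδ]; ring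
  refine ⟨by linarith, ?_⟩
  rw [hδδ, hsq]
  field_simp
  ring

theorem mul_le_integral_of_le_on_Icc {f : ℝ → ℝ} {a b c d A : ℝ} (hca : c ≤ a) (hab : a ≤ b)
    (hbd : b ≤ d) (hf : IntervalIntegrable f volume c d) (hf0 : ∀ t, 0 ≤ f t)
    (hA : ∀ t ∈ Icc a b, A ≤ f t) :
    (b - a) * A ≤ ∫ t in c..d, f t :=
  calc (b - a) * A = ∫ _ in a..b, A := by simp
    _ ≤ ∫ t in a..b, f t := by
        refine intervalIntegral.integral_mono_on hab intervalIntegrable_const (hf.mono_set ?_) hA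
        rw [uIcc_of_le (hca.trans (hab.trans hbd)), uIcc_of_le hab]
        exact Icc_subset_Icc hca hbd
    _ ≤ ∫ t in c..d, f t :=
        intervalIntegral.integral_mono_interval hca hab hbd (ae_of_all _ hf0) hf

theorem stmt_4_general
    (V : ℝ → ℝ)
    (hVloc : LocallyIntegrable V volume)
    (C₁ : ℝ)
    (hC₁ : IsLUB (Set.range fun x : ℝ => ∫ y in x..x + 1, max (-V y) 0) C₁)
    (E : ℂ) (u u' : ℝ → ℂ)
    (hu : ∀ x : ℝ, HasDerivAt u (u' x) x)
    (heq : ∀ a b : ℝ, a ≤ b →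
      u' b - u' a = ∫ t in a..b, ((V t : ℂ) - E) * u t)
    (C₂ : ℝ) (hC₂ : C₂ = C₁ + ‖E‖) (hC₂pos : 0 < C₂)
    (δ : ℝ) (hδ : δ = -(1 / 2) + Real.sqrt (1 / 4 + 1 / (2 * C₂)))
    (p : ℝ) (hp : 1 ≤ p) (x : ℝ) :
    ‖u x‖ ^ p
      ≤ (2 ^ p / δ) * ∫ y in x - δ..x + δ, ‖u y‖ ^ p := by
  have sol : IsSchrodingerSolution V E u u' := ⟨hu, heq⟩
  obtain ⟨hδ0, hδC⟩ := pos_and_mul_add_one_mul_eq_half hC₂pos hδ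
  have hV : ∀ a b, IntervalIntegrable V volume a b := fun a b =>
    (hVloc.integrableOn_isCompact isCompact_uIcc).intervalIntegrable
  obtain ⟨a, ha, hbig⟩ := sol.exists_Icc_half_norm_le hV hδ0.le
    (fun a b => integral_add_const_mul_le_half (f := fun t => max (-V t) 0)
      (fun a b => ⟨(hV a b).1.neg_part, (hV a b).2.neg_part⟩) (fun t => le_max_right _ _)
      (fun x => hC₁.1 ⟨x, rfl⟩) (norm_nonneg E) (hC₂ ▸ hδC)) x
  have hp0 : 0 ≤ p := by linarith
  have hcont : Continuous fun y => ‖u y‖ ^ p :=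
    (continuous_norm.comp sol.continuous).rpow_const fun _ => Or.inr hp0
  have hint := mul_le_integral_of_le_on_Icc (f := fun y => ‖u y‖ ^ p) (c := x - δ) (b := a + δ)
    (d := x + δ) ha.1 (by linarith) (by linarith [ha.2]) (hcont.intervalIntegrable _ _)
    (fun t => by positivity) fun y hy => Real.rpow_le_rpow (by positivity) (hbig y hy) hp0
  rw [add_sub_cancel_left, Real.div_rpow (norm_nonneg _) zero_le_two] at hint
  rw [div_mul_eq_mul_div, le_div_iff₀ hδ0]
  calc ‖u x‖ ^ p * δ = 2 ^ p * (δ * (‖u x‖ ^ p / 2 ^ p)) := by field_simp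
    _ ≤ 2 ^ p * ∫ y in x - δ..x + δ, ‖u y‖ ^ p := by gcongr

/-- Theorem 1.1(iii): for `1 ≤ p < ∞`,
`|u(x)|^p ≤ (2^p/δ) ∫_{x-δ}^{x+δ} |u(y)|^p dy`, where `δ = -1/2 + √(1/4 + 1/(2C₂))`. -/
theorem stmt_4
    (V : ℝ → ℝ) (hVmeas : Measurable V)
    (hVloc : LocallyIntegrable V volume)
    (C₁ : ℝ)
    (hC₁ : IsLUB (Set.range fun x : ℝ => ∫ y in x..x + 1, max (-V y) 0) C₁)
    (E : ℂ) (u u' : ℝ → ℂ)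
    (hu : ∀ x : ℝ, HasDerivAt u (u' x) x)
    (heq : ∀ a b : ℝ, a ≤ b →
      u' b - u' a = ∫ t in a..b, ((V t : ℂ) - E) * u t)
    (C₂ : ℝ) (hC₂ : C₂ = C₁ + ‖E‖) (hC₂pos : 0 < C₂)
    (δ : ℝ) (hδ : δ = -(1 / 2) + Real.sqrt (1 / 4 + 1 / (2 * C₂)))
    (p : ℝ) (hp : 1 ≤ p) (x : ℝ) :
    ‖u x‖ ^ p
      ≤ (2 ^ p / δ) * ∫ y in x - δ..x + δ, ‖u y‖ ^ p :=
  stmt_4_general V hVloc C₁ hC₁ E u u' hu heq C₂ hC₂ hC₂pos δ hδ p hp x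
end
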